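/- Suppose rpl(T_i) = 1, rpl(T_{i+1}) > 1, T_{i+1} has no pony-tail, and T_{i+1} is copying T_i at level 1. Then C(T_i,2) cannot be derived from C(T_{i+1},2) by a single delete-and-append of a leaf, but C(T_i,2) can be derived from C(T_{i+1},1) by a single delete-and-append of a leaf. -/
import Mathlib


/-- An ordered (plane) tree: a root together with the list of subtrees of its
children.  The children are listed **rightmost first** (so the head of the
list is the rightmost child). -/
inductive OTree : Type
  | node : List OTree → OTree

namespace OTree

-- Number of vertices of an ordered tree.
mutual
  def size : OTree → ℕ
    | .node ts => 1 + sizeAux ts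
  def sizeAux : List OTree → ℕ
    | [] => 0
    | t :: ts => size t + sizeAux ts
end

/-- `rpl T` is the number of edges of the rightmost path of `T`
(the path from the root that always follows the rightmost child). -/
def rpl : OTree → ℕ
  | .node [] => 0
  | .node (t :: _) => 1 + rpl t

/-- `p T` removes the rightmost leaf of `T` (the endpoint of the rightmost
path).  On the one-vertex tree it is the identity (junk value). -/
def p : OTree → OTree
  | .node [] => .node []
  | .node (.node [] :: ts) => .node ts
  | .node (.node (c :: cs) :: ts) => .node (p (.node (c :: cs)) :: ts)

/-- `C T i` appends a new leaf as the rightmost child of the vertex at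
level `i` on the rightmost path of `T` (the root has level 1).
Junk values are returned when `i = 0` or `i` exceeds `rpl T + 1`. -/
def C : OTree → ℕ → OTree
  | t, 0 => t
  | .node ts, 1 => .node (.node [] :: ts)
  | .node [], _ + 2 => .node []
  | .node (t :: ts), n + 2 => .node (C t (n + 1) :: ts)

/-- The number of children of the parent of the rightmost leaf
(junk value `0` on the one-vertex tree, which has no such parent). -/
def rmlParentDeg : OTree → ℕ
  | .node [] => 0
  | .node (.node [] :: ts) => ts.length + 1
  | .node (.node (c :: cs) :: _) => rmlParentDeg (.node (c :: cs))

/-- `T` has the pony-tail if the rightmost child of the root has exactly one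
child, which is a leaf. -/
def ponyTail : OTree → Prop
  | .node (.node [.node []] :: _) => True
  | _ => False

end OTree

/-- `AppendLeaf T T'` holds when `T'` is obtained from `T` by attaching one
new leaf to some vertex of `T`, at some position among its children. -/
inductive AppendLeaf : OTree → OTree → Prop
  | root (l r : List OTree) :
      AppendLeaf (.node (l ++ r)) (.node (l ++ OTree.node [] :: r))
  | child (l r : List OTree) (t t' : OTree) :
      AppendLeaf t t' → AppendLeaf (.node (l ++ t :: r)) (.node (l ++ t' :: r))

/-- `DelApp T T'` holds when `T'` can be obtained from `T` by deleting one
leaf and then appending one new leaf somewhere (delete-and-append a leaf). -/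
def DelApp (T T' : OTree) : Prop :=
  ∃ S : OTree, AppendLeaf S T ∧ AppendLeaf S T'

/-- `CopyingAt T T' j` : `T` is copying `T'` at level `j`, i.e. `T'` is
obtained from `T` by appending a new leaf which becomes the rightmost leaf of
`T'` (namely forming `C T j`, whose rightmost path has `j` edges) and then
removing some other leaf. -/
def CopyingAt (T T' : OTree) (j : ℕ) : Prop :=
  T ≠ T' ∧ 1 ≤ j ∧ j ≤ T.rpl + 1 ∧ T'.rpl = j ∧ AppendLeaf T' (T.C j)

/-- `T` is copying `T'`. -/
def Copying (T T' : OTree) : Prop := ∃ j : ℕ, CopyingAt T T' j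



section AuxLemmas

lemma appendLeaf_inv {S T : OTree} (h : AppendLeaf S T) :
    (∃ l r, S = .node (l ++ r) ∧ T = .node (l ++ OTree.node [] :: r)) ∨
    (∃ l r t t', AppendLeaf t t' ∧ S = .node (l ++ t :: r) ∧ T = .node (l ++ t' :: r)) := by
  cases h with
  | root l r => exact Or.inl ⟨l, r, rfl, rfl⟩
  | child l r t t' ht => exact Or.inr ⟨l, r, t, t', ht, rfl, rfl⟩

lemma not_appendLeaf_nil (t : OTree) : ¬ AppendLeaf t (.node []) := by
  intro h
  rcases appendLeaf_inv h with ⟨l, r, _, h2⟩ | ⟨l, r, a, a', _, _, h2⟩ <;>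
    · injection h2 with h2; simp at h2

lemma head_cases {S x : OTree} {xs : List OTree}
    (h : AppendLeaf S (.node (x :: xs))) :
    (∃ ss, S = .node (x :: ss)) ∨
    (∃ t ss, S = .node (t :: ss) ∧ AppendLeaf t x) ∨
    (x = .node [] ∧ S = .node xs) := by
  rcases appendLeaf_inv h with ⟨l, r, h1, h2⟩ | ⟨l, r, t, t', ht, h1, h2⟩ <;>
      injection h2 with h2
  · cases l with
    | nil =>
        right; right
        simp only [List.nil_append, List.cons.injEq] at h2
        exact ⟨h2.1, h2.2 ▸ (by simpa using h1)⟩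
    | cons a l' =>
        left
        simp only [List.cons_append, List.cons.injEq] at h2
        exact ⟨l' ++ r, by rw [h1, h2.1]; rfl⟩
  · cases l with
    | nil =>
        right; left
        simp only [List.nil_append, List.cons.injEq] at h2
        exact ⟨t, r, by simpa using h1, h2.1 ▸ ht⟩
    | cons a l' =>
        left
        simp only [List.cons_append, List.cons.injEq] at h2
        exact ⟨l' ++ t :: r, by rw [h1, h2.1]; rfl⟩

lemma appendLeaf_leaf_inv {t : OTree} (h : AppendLeaf t (.node [.node []])) :
    t = .node [] := by
  rcases appendLeaf_inv h with ⟨l, r, h1, h2⟩ | ⟨l, r, a, a', ha, h1, h2⟩ <;>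
      injection h2 with h2
  · cases l with
    | nil => simp only [List.nil_append, List.cons.injEq] at h2; simp [h1, h2.2]
    | cons b l' => simp_all
  · cases l with
    | nil =>
        simp only [List.nil_append, List.cons.injEq] at h2
        exact absurd (h2.1 ▸ ha) (not_appendLeaf_nil a)
    | cons b l' => simp_all

lemma nil_big {c : OTree} {cs : List OTree} :
    ¬ AppendLeaf (.node []) (.node (.node [] :: c :: cs)) := by
  intro h
  rcases appendLeaf_inv h with ⟨l, r, h1, h2⟩ | ⟨l, r, a, a', ha, h1, h2⟩ <;>
      injection h1 with h1 <;> injection h2 with h2 <;> simp_all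

lemma big_inv {c : OTree} {cs : List OTree}
    (h : AppendLeaf (.node [.node []]) (.node (.node [] :: c :: cs))) :
    c = .node [] ∧ cs = [] := by
  rcases appendLeaf_inv h with ⟨l, r, h1, h2⟩ | ⟨l, r, a, a', ha, h1, h2⟩ <;>
      injection h1 with h1 <;> injection h2 with h2
  · cases l with
    | nil =>
        simp only [List.nil_append, List.cons.injEq, true_and] at h1 h2
        rw [← h1] at h2
        simpa using h2
    | cons b l' =>
        simp only [List.cons_append, List.cons.injEq] at h1 h2
        obtain ⟨rfl, rfl⟩ := List.append_eq_nil_iff.mp h1.2.symm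
        simpa using h2.2
  · cases l with
    | nil =>
        simp only [List.nil_append, List.cons.injEq] at h1 h2
        rw [← h1.2] at h2
        simp at h2
    | cons b l' =>
        simp only [List.cons_append, List.cons.injEq] at h1
        exact absurd h1.2.symm (by simp)

end AuxLemmas

/-- Suppose `rpl T₁ = 1`, `rpl T₂ > 1`, `T₂` has no pony-tail, and `T₂` is
copying `T₁` at level 1.  Then `C T₁ 2` cannot be derived from `C T₂ 2` by a
single delete-and-append of a leaf, but `C T₁ 2` can be derived from `C T₂ 1`
by a single delete-and-append of a leaf. -/
theorem stmt_14 (T₁ T₂ : OTree) (h1 : T₁.rpl = 1) (h2 : 1 < T₂.rpl)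
    (hpt : ¬ T₂.ponyTail) (hcopy : CopyingAt T₂ T₁ 1) :
    ¬ DelApp (T₂.C 2) (T₁.C 2) ∧ DelApp (T₂.C 1) (T₁.C 2) := by
  obtain ⟨hne, -, -, -, happ⟩ := hcopy
  -- Extract the shape of T₁ : node (node [] :: us)
  obtain ⟨l₁⟩ := T₁
  cases l₁ with
  | nil => simp [OTree.rpl] at h1
  | cons a us =>
  obtain ⟨al⟩ := a
  cases al with
  | cons b bl => simp [OTree.rpl] at h1
  | nil =>
  -- Extract the shape of T₂ : node (node (c :: cs) :: ts)
  obtain ⟨l₂⟩ := T₂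
  cases l₂ with
  | nil => simp [OTree.rpl] at h2
  | cons a₂ ts =>
  obtain ⟨al₂⟩ := a₂
  cases al₂ with
  | nil => simp [OTree.rpl] at h2
  | cons c cs =>
  -- no pony-tail
  have hpt' : ¬ (c = OTree.node [] ∧ cs = []) := by
    rintro ⟨rfl, rfl⟩
    exact hpt trivial
  have e1 : (OTree.node (OTree.node [] :: us)).C 2
      = OTree.node (OTree.node [OTree.node []] :: us) := rfl
  have e2 : (OTree.node (OTree.node (c :: cs) :: ts)).C 2
      = OTree.node (OTree.node (OTree.node [] :: c :: cs) :: ts) := rfl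
  constructor
  · rintro ⟨S, hS2, hS1⟩
    rw [e2] at hS2
    rw [e1] at hS1
    -- From hS1 : the head child of S is either `node [node []]` or `node []`.
    have hhead : ∃ h ss, S = OTree.node (h :: ss) ∧
        (h = OTree.node [OTree.node []] ∨ h = OTree.node []) := by
      rcases head_cases hS1 with ⟨ss, rfl⟩ | ⟨t, ss, rfl, ht⟩ | ⟨habs, -⟩
      · exact ⟨_, ss, rfl, Or.inl rfl⟩
      · exact ⟨t, ss, rfl, Or.inr (appendLeaf_leaf_inv ht)⟩
      · injection habs with habs; simp at habs
    obtain ⟨h, ss, rfl, hh⟩ := hhead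
    rcases head_cases hS2 with ⟨ss', heq⟩ | ⟨t, ss', heq, ht⟩ | ⟨habs, -⟩
    · injection heq with heq
      injection heq with heq1 heq2
      rcases hh with rfl | rfl <;> injection heq1 with heq1 <;> simp at heq1
    · injection heq with heq
      injection heq with heq1 heq2
      subst heq1
      rcases hh with rfl | rfl
      · exact hpt' (big_inv ht)
      · exact nil_big ht
    · injection habs with habs; simp at habs
  · refine ⟨OTree.node (OTree.node [] :: us), happ, ?_⟩
    rw [e1]
    exact AppendLeaf.child [] us (OTree.node []) (OTree.node [OTree.node []])
      (AppendLeaf.root [] [])
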